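/- arXiv:2403.14522 — 2 statements merged into one kernel-verified Lean document; each statement's English description precedes it below -/
import Mathlib

section
/- For n ≥ 2, E[X_n^n] − E[X_n^{n-1}] = n · E[X_n (X_n + 1)^{n-2}], where X_n is a Poisson random variable with parameter n. -/
/-!
Poisson size-biasing `E[X f(X)] = λ E[f(X + 1)]` turns `E[X^(m+2)]` and `E[X^(m+1)]` into
`λ E[(X+1)^(m+1)]` and `λ E[(X+1)^m]`, whose difference is `λ E[X (X+1)^m]`.
-/

/-- Probability that a Poisson random variable with parameter `l` equals `k`. -/
noncomputable def poissonPMF (l : ℝ) (k : ℕ) : ℝ :=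
  Real.exp (-l) * l ^ k / (k.factorial : ℝ)

/-- Expectation of `f(X)` for `X` Poisson with parameter `l`. -/
noncomputable def poissonExp (l : ℝ) (f : ℕ → ℝ) : ℝ :=
  ∑' k : ℕ, poissonPMF l k * f k

lemma poissonPMF_nonneg {l : ℝ} (hl : 0 ≤ l) (k : ℕ) : 0 ≤ poissonPMF l k := by
  unfold poissonPMF
  positivity

lemma poissonPMF_mul_succ_pow_le {l : ℝ} (hl : 0 ≤ l) (m k : ℕ) :
    poissonPMF l k * ((k : ℝ) + 1) ^ m
      ≤ Real.exp (1 - l) * m.factorial * ((l * Real.exp 1) ^ k / k.factorial) := by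
  have hpow : ((k : ℝ) + 1) ^ m ≤ m.factorial * Real.exp ((k : ℝ) + 1) := by
    have := Real.pow_div_factorial_le_exp (x := (k : ℝ) + 1) (by positivity) m
    rwa [div_le_iff₀ (by positivity), mul_comm] at this
  have hexp : Real.exp (1 - l) * Real.exp 1 ^ k = Real.exp (-l) * Real.exp ((k : ℝ) + 1) := by
    rw [← Real.exp_nat_mul, ← Real.exp_add, ← Real.exp_add]
    ring_nf
  calc poissonPMF l k * ((k : ℝ) + 1) ^ m
      ≤ poissonPMF l k * (m.factorial * Real.exp ((k : ℝ) + 1)) :=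
        mul_le_mul_of_nonneg_left hpow (poissonPMF_nonneg hl k)
    _ = Real.exp (1 - l) * m.factorial * ((l * Real.exp 1) ^ k / k.factorial) := by
        rw [poissonPMF, mul_pow]
        linear_combination -(m.factorial * l ^ k / k.factorial) * hexp

lemma summable_poissonPMF_mul_succ_pow {l : ℝ} (hl : 0 ≤ l) (m : ℕ) :
    Summable fun k : ℕ => poissonPMF l k * ((k : ℝ) + 1) ^ m :=
  .of_nonneg_of_le (fun k => mul_nonneg (poissonPMF_nonneg hl k) (by positivity))
    (poissonPMF_mul_succ_pow_le hl m) ((Real.summable_pow_div_factorial _).mul_left _)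

lemma poissonExp_sub {l : ℝ} {f g : ℕ → ℝ}
    (hf : Summable fun k => poissonPMF l k * f k) (hg : Summable fun k => poissonPMF l k * g k) :
    poissonExp l (fun k => f k - g k) = poissonExp l f - poissonExp l g := by
  simp only [poissonExp, mul_sub]
  exact hf.tsum_sub hg

lemma poissonPMF_succ_mul (l : ℝ) (k : ℕ) :
    poissonPMF l (k + 1) * (k + 1 : ℕ) = l * poissonPMF l k := by
  simp only [poissonPMF, Nat.factorial_succ]
  push_cast
  field_simp
  ring

/-- No summability is needed: the `k = 0` term on the left vanishes and the rest of the series is a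
reindexing of the right-hand one. -/
lemma poissonExp_natCast_mul (l : ℝ) (f : ℕ → ℝ) :
    poissonExp l (fun k => k * f k) = l * poissonExp l (fun k => f (k + 1)) := by
  have hsupp : Function.support (fun k : ℕ => poissonPMF l k * (k * f k)) ⊆ Set.range Nat.succ := by
    rintro (_ | k) hk
    · simp at hk
    · exact ⟨k, rfl⟩
  rw [poissonExp, poissonExp, ← tsum_mul_left, ← Nat.succ_injective.tsum_eq hsupp]
  congr 1 with k
  rw [Nat.succ_eq_add_one, ← mul_assoc, poissonPMF_succ_mul, mul_assoc]

lemma poissonExp_pow_succ (l : ℝ) (m : ℕ) :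
    poissonExp l (fun k => (k : ℝ) ^ (m + 1)) = l * poissonExp l (fun k => ((k : ℝ) + 1) ^ m) := by
  simpa [pow_succ', Nat.cast_add_one] using poissonExp_natCast_mul l (fun k => (k : ℝ) ^ m)

lemma poissonExp_pow_sub_pow {l : ℝ} (hl : 0 ≤ l) (m : ℕ) :
    poissonExp l (fun k => (k : ℝ) ^ (m + 2)) - poissonExp l (fun k => (k : ℝ) ^ (m + 1))
      = l * poissonExp l (fun k => (k : ℝ) * ((k : ℝ) + 1) ^ m) := by
  have hsplit : (fun k : ℕ => (k : ℝ) * ((k : ℝ) + 1) ^ m)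
      = fun k : ℕ => ((k : ℝ) + 1) ^ (m + 1) - ((k : ℝ) + 1) ^ m := by
    ext k; ring
  rw [poissonExp_pow_succ, poissonExp_pow_succ, hsplit,
    poissonExp_sub (summable_poissonPMF_mul_succ_pow hl _) (summable_poissonPMF_mul_succ_pow hl _)]
  ring

/-- For `n ≥ 2` and `X_n` Poisson with parameter `n`,
`E[X_n^n] − E[X_n^{n-1}] = n·E[X_n (X_n + 1)^{n-2}]`. -/
theorem poisson_moment_difference (n : ℕ) (hn : 2 ≤ n) :
    poissonExp (n : ℝ) (fun k => (k : ℝ) ^ n)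
        - poissonExp (n : ℝ) (fun k => (k : ℝ) ^ (n - 1))
      = (n : ℝ) * poissonExp (n : ℝ) (fun k => (k : ℝ) * ((k : ℝ) + 1) ^ (n - 2)) := by
  obtain ⟨m, rfl⟩ := Nat.exists_eq_add_of_le' hn
  exact poissonExp_pow_sub_pow (Nat.cast_nonneg _) m
end

section
/- Let H(z) = ∑_{n≥1} h_n z^n/n! be the exponential generating function for the number h_n of rooted spanning trees of the complete hypergraph on n labeled vertices. Then H(z) = z·exp(exp(H(z)) − 1) as formal power series. -/
/-!
Substituting a series `H` with zero constant term is a ring homomorphism `f ↦ f(H)`, so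
`exp (exp H - 1)` is the Bell series `exp (exp X - 1) = ∑ Bₙ Xⁿ/n!` evaluated at `H`. The Bell
series comes from `(exp X - 1)ᵏ = k! ∑ S(n,k) Xⁿ/n!`: differentiating `fₖ = (exp X - 1)ᵏ` gives
`f'ₖ₊₁ = (k+1) (fₖ₊₁ + fₖ)`, which on coefficients is the recurrence of `S`. Finally, the
coefficient of `Xᵐ` in `Hᵏ` is the multinomial sum of the recurrence divided by `m!`, so the
coefficient of `X^{m+1}` on each side is `h (m+1) / (m+1)!`.
-/

/-- Stirling numbers of the second kind. -/
def stirling2 : ℕ → ℕ → ℕ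
  | 0, 0 => 1
  | 0, _ + 1 => 0
  | _ + 1, 0 => 0
  | n + 1, k + 1 => (k + 1) * stirling2 n (k + 1) + stirling2 n k

/-- Bell numbers: `B(k) = ∑_{i=0}^{k} S(k,i)`. -/
def bell (k : ℕ) : ℕ := ∑ i ∈ Finset.range (k + 1), stirling2 k i

/-- The composition `exp ∘ S` of a formal power series `S` with zero constant
term with the exponential series, given coefficientwise (for such `S`, only
the terms `S^k/k!` with `k ≤ n` contribute to the `n`-th coefficient). -/
noncomputable def expComp (S : PowerSeries ℚ) : PowerSeries ℚ :=
  PowerSeries.mk fun n =>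
    ∑ k ∈ Finset.range (n + 1), PowerSeries.coeff n (S ^ k) / (k.factorial : ℚ)

open Finset PowerSeries
open scoped Nat

theorem stirling2_eq_stirlingSecond : stirling2 = Nat.stirlingSecond := by
  funext n k
  induction n generalizing k with
  | zero => cases k <;> rfl
  | succ n ih => cases k <;> simp [stirling2, Nat.stirlingSecond, ih]

theorem bell_eq_sum_range_stirling2 {j N : ℕ} (hj : j ≤ N) :
    bell j = ∑ k ∈ range (N + 1), stirling2 j k := by
  rw [bell]
  refine sum_subset (range_subset_range.2 (by omega)) fun k _ hk => ?_
  rw [stirling2_eq_stirlingSecond]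
  exact Nat.stirlingSecond_eq_zero_of_lt (by simpa using hk)

namespace PowerSeries

variable {R : Type*} [CommRing R]

theorem coeff_pow_eq_zero_of_lt {f : R⟦X⟧} (hf : constantCoeff f = 0) {n k : ℕ} (h : n < k) :
    coeff n (f ^ k) = 0 :=
  coeff_of_lt_order _ ((Nat.cast_lt.2 h).trans_le (le_order_pow_of_constantCoeff_eq_zero k hf))

theorem coeff_subst_eq_sum_range (f : R⟦X⟧) {g : R⟦X⟧} (hg : constantCoeff g = 0) (n : ℕ) :
    coeff n (f.subst g) = ∑ d ∈ range (n + 1), coeff d f * coeff n (g ^ d) := by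
  rw [coeff_subst' (HasSubst.of_constantCoeff_zero' hg)]
  refine finsum_eq_sum_of_support_subset _ fun d hd => ?_
  by_contra hdn
  exact hd (by simp [coeff_pow_eq_zero_of_lt hg (not_lt.1 (mt mem_range.2 hdn))])

theorem coeff_pow_eq_sum_antidiagonalTuple (f : R⟦X⟧) (k n : ℕ) :
    coeff n (f ^ k) = ∑ a ∈ Nat.antidiagonalTuple k n, ∏ i, coeff (a i) f := by
  have hpow : f ^ k = ∏ _i : Fin k, f := by simp
  rw [hpow, coeff_prod, finsuppAntidiag, sum_map, ← piAntidiag_univ_fin_eq_antidiagonalTuple]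
  exact sum_attach _ fun a : Fin k → ℕ => ∏ i, coeff (a i) f

section CharZero

variable {K : Type*} [Field K] [CharZero K]

theorem coeff_pow_mk_div_factorial (a : ℕ → K) (k n : ℕ) :
    coeff n ((mk fun i => a i / i !) ^ k)
      = (∑ t ∈ Nat.antidiagonalTuple k n, Nat.multinomial univ t * ∏ j, a (t j)) / n ! := by
  rw [coeff_pow_eq_sum_antidiagonalTuple, sum_div]
  refine sum_congr rfl fun t ht => ?_
  have hspec : ((∏ j, (t j)! : ℕ) : K) * Nat.multinomial univ t = n ! := by
    rw [← Nat.cast_mul, Nat.multinomial_spec, (Nat.mem_antidiagonalTuple.1 ht)]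
  simp only [coeff_mk, prod_div_distrib]
  rw [← hspec]
  push_cast
  have hfact : ∏ j, ((t j)! : K) ≠ 0 := prod_ne_zero_iff.2 fun j _ =>
    Nat.cast_ne_zero.2 (Nat.factorial_ne_zero _)
  have hmult : (Nat.multinomial univ t : K) ≠ 0 := by
    exact_mod_cast (Nat.multinomial_pos univ t).ne'
  field_simp

theorem coeff_pow_mk_ite_zero (h : ℕ → K) (k n : ℕ) :
    coeff n ((mk fun i => if i = 0 then 0 else h i / i !) ^ k)
      = (∑ t ∈ (Nat.antidiagonalTuple k n).filter (fun t => ∀ j, 0 < t j),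
          Nat.multinomial univ t * ∏ j, h (t j)) / n ! := by
  have hmk : (mk fun i => if i = 0 then 0 else h i / i !)
      = mk fun i => (if i = 0 then 0 else h i) / i ! := by
    congr 1; funext i; split_ifs <;> simp
  rw [hmk, coeff_pow_mk_div_factorial, sum_filter]
  congr 1
  refine sum_congr rfl fun t _ => ?_
  split_ifs with hpos
  · simp only [(Nat.pos_iff_ne_zero.1 (hpos _)), if_false]
  · obtain ⟨j, hj⟩ := not_forall.1 hpos
    rw [prod_eq_zero (mem_univ j) (by simp [Nat.eq_zero_of_not_pos hj]), mul_zero]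

end CharZero

theorem derivative_exp_sub_one_pow_succ (k : ℕ) :
    d⁄dX ℚ ((exp ℚ - 1) ^ (k + 1))
      = (k + 1 : ℚ) • ((exp ℚ - 1) ^ (k + 1) + (exp ℚ - 1) ^ k) := by
  rw [derivative_pow, map_sub, derivative_exp, derivative_one, sub_zero, smul_eq_C_mul]
  simp only [map_add, map_natCast, map_one, Nat.cast_add, Nat.cast_one, add_tsub_cancel_right]
  ring

theorem coeff_exp_sub_one_pow (j k : ℕ) :
    coeff j ((exp ℚ - 1) ^ k) = (k ! * stirling2 j k / j ! : ℚ) := by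
  induction j generalizing k with
  | zero => cases k <;> simp [stirling2]
  | succ j ih =>
    cases k with
    | zero => simp [stirling2]
    | succ k =>
      have hode := congrArg (coeff j) (derivative_exp_sub_one_pow_succ k)
      rw [coeff_derivative, coeff_smul, map_add, ih, ih, smul_eq_mul] at hode
      rw [eq_div_iff (by positivity), Nat.factorial_succ j, Nat.cast_mul, ← mul_assoc,
        Nat.cast_succ, hode, stirling2, Nat.factorial_succ k]
      push_cast
      field_simp

theorem expComp_eq_subst {S : ℚ⟦X⟧} (hS : constantCoeff S = 0) :
    expComp S = (exp ℚ).subst S := by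
  ext n
  rw [expComp, coeff_mk, coeff_subst_eq_sum_range _ hS]
  refine sum_congr rfl fun k _ => ?_
  simp [div_eq_inv_mul]

theorem exp_subst_exp_sub_one :
    (exp ℚ).subst (exp ℚ - 1) = mk fun n => (bell n / n ! : ℚ) := by
  ext n
  rw [coeff_subst_eq_sum_range _ (by simp), coeff_mk, bell_eq_sum_range_stirling2 le_rfl,
    Nat.cast_sum, sum_div]
  refine sum_congr rfl fun k _ => ?_
  rw [coeff_exp, coeff_exp_sub_one_pow]
  simp only [Algebra.algebraMap_self, one_div, map_inv₀, map_natCast]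
  field_simp

theorem expComp_expComp_sub_one {H : ℚ⟦X⟧} (hH : constantCoeff H = 0) :
    expComp (expComp H - 1) = (mk fun n => (bell n / n ! : ℚ)).subst H := by
  have hsubst : HasSubst H := HasSubst.of_constantCoeff_zero' hH
  have hsub : expComp H - 1 = (exp ℚ - 1).subst H := by
    rw [expComp_eq_subst hH, subst_sub hsubst, ← coe_substAlgHom hsubst, map_one]
  rw [hsub, expComp_eq_subst (constantCoeff_subst_eq_zero hH _ (by simp)),
    ← subst_comp_subst_apply (HasSubst.of_constantCoeff_zero' (by simp)) hsubst,
    exp_subst_exp_sub_one]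

end PowerSeries

/-- Let `h n` count rooted spanning trees of the complete hypergraph on `n`
labeled vertices, i.e. `h 1 = 1` and for `n > 1`,
`h n = n·∑_{k>0} (B(k)/k!)·∑_{a_1+⋯+a_k = n-1, a_j>0} multinomial(n-1; a)·∏ h(a_j)`.
Then the exponential generating function `H(z) = ∑_{n≥1} h_n z^n/n!` satisfies
`H(z) = z·exp(exp(H(z)) − 1)` as formal power series. -/
theorem hypertree_egf_equation (h : ℕ → ℚ)
    (h1 : h 1 = 1)
    (hrec : ∀ n : ℕ, 1 < n →
      h n = (n : ℚ) * ∑ k ∈ Finset.Icc 1 (n - 1),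
        ((bell k : ℚ) / (k.factorial : ℚ)) *
          ∑ a ∈ (Finset.Nat.antidiagonalTuple k (n - 1)).filter
              (fun a => ∀ j, 0 < a j),
            (Nat.multinomial Finset.univ a : ℚ) * ∏ j, h (a j)) :
    (PowerSeries.mk fun m => if m = 0 then 0 else h m / (m.factorial : ℚ))
      = PowerSeries.X *
          expComp (expComp
            (PowerSeries.mk fun m => if m = 0 then 0 else h m / (m.factorial : ℚ)) - 1) := by
  have hH : constantCoeff (mk fun m => if m = 0 then 0 else h m / (m ! : ℚ)) = 0 := by simp
  rw [expComp_expComp_sub_one hH]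
  ext (_ | m)
  · simp
  rw [coeff_succ_X_mul, coeff_subst_eq_sum_range _ hH, coeff_mk, if_neg m.succ_ne_zero]
  rcases Nat.eq_zero_or_pos m with rfl | hm
  · simp [h1, bell, stirling2]
  rw [range_eq_Ico, sum_eq_sum_Ico_succ_bot (by omega), pow_zero, coeff_one,
    if_neg hm.ne', mul_zero, zero_add, Ico_add_one_right_eq_Icc, hrec (m + 1) (by omega),
    Nat.add_sub_cancel, mul_sum, sum_div]
  refine sum_congr rfl fun k _ => ?_
  rw [coeff_pow_mk_ite_zero, coeff_mk, Nat.factorial_succ, Nat.cast_mul]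
  field_simp
end
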